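/- Let n ≥ 1, let 1 ≤ i ≤ n and let k ≥ 1. In the quotient ring (ℤ/2)[u₁,…,uₙ]/𝒰ₙ, the image of u_i^k equals the image of a polynomial Q all of whose monomials are square-free and which involves only the variables u₁,…,u_i. -/

import Mathlib

open MvPolynomial

/-- The ideal 𝒰ₙ ⊆ (ℤ/2)[u₁,…,uₙ] generated by u₁² and u_i² + (u₁+⋯+u_{i−1})·u_i for
2 ≤ i ≤ n (zero-based indexing). -/
noncomputable def Uideal (n : ℕ) : Ideal (MvPolynomial (Fin n) (ZMod 2)) :=
  Ideal.span (Set.range fun i : Fin n =>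
    X i ^ 2 + (∑ j ∈ Finset.Iio i, X j) * X i)

/-!
Modulo an ideal containing every `X j ^ 2 + (∑ l < j, X l) * X j`, multiplying a square-free
monomial `u` by a variable `X j` it already contains gives `X j ^ 2 * (u / X j)`, which is
congruent to `-∑ l < j, X l * u`. Strong induction on `j` therefore shows that the square-free
polynomials in the variables below `t` span, modulo the ideal, a module stable under
multiplication by each such variable, hence containing every polynomial in those variables.
-/

section SquarefreeReduction

variable {R : Type*} [CommRing R] {n : ℕ}

def squarefreeBelow (t : ℕ) : Set (Fin n →₀ ℕ) :=
  {m | ∀ j, m j ≤ 1 ∧ (m j ≠ 0 → (j : ℕ) < t)}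

noncomputable def squarefreeModulo (I : Ideal (MvPolynomial (Fin n) R)) (t : ℕ) :
    Submodule R (MvPolynomial (Fin n) R) :=
  restrictSupport R (squarefreeBelow t) ⊔ I.restrictScalars R

variable {I : Ideal (MvPolynomial (Fin n) R)}

theorem X_mul_monomial_mem_squarefreeModulo
    (hI : ∀ j, X j ^ 2 + (∑ l ∈ Finset.Iio j, X l) * X j ∈ I)
    {t : ℕ} {j : Fin n} (hj : (j : ℕ) < t)
    {m : Fin n →₀ ℕ} (hm : m ∈ squarefreeBelow t) :
    X j * monomial m (1 : R) ∈ squarefreeModulo I t := by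
  induction j using WellFoundedLT.induction with
  | _ j ih =>
  by_cases hmj : m j = 0
  · rw [X, monomial_mul, one_mul]
    refine Submodule.mem_sup_left ((monomial_mem_restrictSupport R).mpr (Or.inl fun l => ?_))
    obtain rfl | hjl := eq_or_ne j l
    · simp [hmj, hj]
    · simpa [Finsupp.single_apply, hjl] using hm l
  · have hsplit : monomial m (1 : R) = X j * monomial (m.erase j) 1 := by
      have hmj1 : m j = 1 := by have := (hm j).1; omega
      conv_lhs => rw [← Finsupp.single_add_erase j m, hmj1]
      rw [X, monomial_mul, one_mul]
    have hreduce : X j * monomial m (1 : R) =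
        (X j ^ 2 + (∑ l ∈ Finset.Iio j, X l) * X j) * monomial (m.erase j) 1 -
          ∑ l ∈ Finset.Iio j, X l * monomial m 1 := by
      rw [← Finset.sum_mul, hsplit]
      ring
    rw [hreduce]
    refine Submodule.sub_mem _ (Submodule.mem_sup_right (I.mul_mem_right _ (hI j))) ?_
    exact Submodule.sum_mem _ fun l hl =>
      ih l (Finset.mem_Iio.mp hl) ((Fin.lt_def.mp (Finset.mem_Iio.mp hl)).trans hj)

theorem X_mul_mem_squarefreeModulo
    (hI : ∀ j, X j ^ 2 + (∑ l ∈ Finset.Iio j, X l) * X j ∈ I)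
    {t : ℕ} {j : Fin n} (hj : (j : ℕ) < t)
    {p : MvPolynomial (Fin n) R} (hp : p ∈ squarefreeModulo I t) :
    X j * p ∈ squarefreeModulo I t := by
  suffices squarefreeModulo I t ≤ (squarefreeModulo I t).comap (LinearMap.mulLeft R (X j)) from
    this hp
  refine sup_le ?_ fun q hq => Submodule.mem_sup_right (I.mul_mem_left (X j) hq)
  rw [restrictSupport_eq_span, Submodule.span_le]
  rintro _ ⟨m, hm, rfl⟩
  exact X_mul_monomial_mem_squarefreeModulo hI hj hm

theorem supported_le_squarefreeModulo
    (hI : ∀ j, X j ^ 2 + (∑ l ∈ Finset.Iio j, X l) * X j ∈ I) (t : ℕ) :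
    (supported R {j : Fin n | (j : ℕ) < t}).toSubmodule ≤ squarefreeModulo I t := by
  intro p hp
  have hmul : ∀ q ∈ squarefreeModulo I t, p * q ∈ squarefreeModulo I t := by
    induction hp using Algebra.adjoin_induction with
    | mem x hx =>
      obtain ⟨j, hj, rfl⟩ := hx
      exact fun q hq => X_mul_mem_squarefreeModulo hI hj hq
    | algebraMap r =>
      intro q hq
      rw [← Algebra.smul_def]
      exact Submodule.smul_mem _ r hq
    | add x y _ _ hx hy =>
      intro q hq
      rw [add_mul]
      exact add_mem (hx q hq) (hy q hq)
    | mul x y _ _ hx hy =>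
      intro q hq
      rw [mul_assoc]
      exact hx _ (hy q hq)
  have hone : (1 : MvPolynomial (Fin n) R) ∈ squarefreeModulo I t :=
    Submodule.mem_sup_left ((monomial_mem_restrictSupport R).mpr (Or.inl fun j => by simp))
  simpa using hmul 1 hone

theorem exists_squarefree_sub_mem
    (hI : ∀ j, X j ^ 2 + (∑ l ∈ Finset.Iio j, X l) * X j ∈ I)
    {t : ℕ} {p : MvPolynomial (Fin n) R}
    (hp : p ∈ supported R {j : Fin n | (j : ℕ) < t}) :
    ∃ q ∈ restrictSupport R (squarefreeBelow t), p - q ∈ I := by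
  obtain ⟨q, hq, r, hr, rfl⟩ := Submodule.mem_sup.mp (supported_le_squarefreeModulo hI t hp)
  exact ⟨q, hq, by simpa using hr⟩

end SquarefreeReduction

theorem X_sq_add_mem_Uideal {n : ℕ} (j : Fin n) :
    X j ^ 2 + (∑ l ∈ Finset.Iio j, X l) * X j ∈ Uideal n :=
  Ideal.subset_span ⟨j, rfl⟩

/-- For `1 ≤ i ≤ n` and `k ≥ 1`, in `(ℤ/2)[u₁,…,uₙ]/𝒰ₙ` the image of `u_i^k` equals the
image of a polynomial `Q` all of whose monomials are square-free and which involves only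
the variables `u₁,…,u_i` (zero-based: only variables `X j` with `j < i`). -/
theorem stmt3 (n : ℕ) (i : ℕ) (hi1 : 1 ≤ i) (hin : i ≤ n)
    (k : ℕ) :
    ∃ Q : MvPolynomial (Fin n) (ZMod 2),
      (∀ m ∈ Q.support, ∀ j, m j ≤ 1) ∧
      (∀ m ∈ Q.support, ∀ j : Fin n, m j ≠ 0 → (j : ℕ) < i) ∧
      Ideal.Quotient.mk (Uideal n) ((X (⟨i - 1, by omega⟩ : Fin n)) ^ k) =
        Ideal.Quotient.mk (Uideal n) Q := by
  have hX : X (⟨i - 1, by omega⟩ : Fin n) ∈ supported (ZMod 2) {j : Fin n | (j : ℕ) < i} :=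
    X_mem_supported.mpr (show i - 1 < i by omega)
  obtain ⟨Q, hQ, hXQ⟩ := exists_squarefree_sub_mem X_sq_add_mem_Uideal (pow_mem hX k)
  exact ⟨Q, fun m hm j => (hQ hm j).1, fun m hm j => (hQ hm j).2, Ideal.Quotient.eq.mpr hXQ⟩
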